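/- Let f : [0,1] → [0,∞) satisfy f(p) = f(1−p) for all p ∈ [0,1], with p ↦ f(p)/p non-increasing on (0,1]. Let 0 ≤ p_1 ≤ … ≤ p_m ≤ 1, let 1 ≤ i ≤ k ≤ m−1. Then (1−p_{k+1})·C_f(m−k; p_{−(k+1)}) − (1−p_i)·C_f(m−k; p_{−i}) ≤ (p_i − p_{k+1})·C_f(m−k−1; p_{−(i,k+1)}) + (1−p_{k+1})·f(p_i) − (1−p_i)·f(p_{k+1}), where p_{−(i,k+1)} denotes the list with both entries i and k+1 removed. -/

import Mathlib

/-- The optimal expected cost `C_f(θ; p)` of sequentially computing the Boolean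
threshold function `Π_θ` on independent Bernoulli variables with parameters given by
the list `p`, where querying a node with parameter `q` costs `f q`.
`cost f θ p = 0` if `θ = 0` or `θ > p.length`, and otherwise it is the minimum over
nodes `i` of `f p_i + p_i • cost f (θ-1) p_{-i} + (1 - p_i) • cost f θ p_{-i}`. -/
noncomputable def cost (f : ℝ → ℝ) : ℕ → List ℝ → ℝ
  | 0, _ => 0
  | (θ+1), p =>
      if p.length < θ + 1 then 0
      else ⨅ i : Fin p.length,
        (f (p.get i) + p.get i * cost f θ (p.eraseIdx i.1)
          + (1 - p.get i) * cost f (θ+1) (p.eraseIdx i.1))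
termination_by θ p => p.length
decreasing_by
  all_goals (have h := i.isLt; simp [List.length_eraseIdx, h]; omega)

/-!
For a sorted list of parameters, the optimal strategy for threshold `θ` queries first the node
with the `θ`-th largest parameter, the *pivot*. This is proved by strong induction on the
number of nodes, together with exchange inequalities comparing the removal of the pivot `t`
with the removal of another node `u`. When `t` is also the pivot of the list without `u`,
querying `u` first in the list without `t`, and `t` first in the list without `u`, leave the
same residual list, and the exchange inequalities follow at once. In the other cases all the
lists involved share a pivot `c`; expanding every cost at `c` writes the inequality as a
convex combination, with weights `c` and `1 - c`, of instances on the list without `c`. The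
base cases are `a f(b) ≤ b f(a)` for `a ≤ b`, from the monotonicity of `f(p)/p`, and its mirror
image `(1 - b) f(a) ≤ (1 - a) f(b)` under `f(p) = f(1 - p)`.
-/

open Set

theorem List.eraseIdx_eraseIdx_pred {α : Type*} (q : List α) {l h : ℕ} (hlh : l < h) :
    (q.eraseIdx l).eraseIdx (h - 1) = (q.eraseIdx h).eraseIdx l := by
  apply List.ext_getElem
  · simp only [List.length_eraseIdx]
    split_ifs <;> omega
  · intro j _ _
    simp only [List.getElem_eraseIdx]
    split_ifs <;> first | rfl | omega

theorem mul_apply_le_mul_apply_of_antitoneOn_div {f : ℝ → ℝ} (hf0 : 0 ≤ f 0)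
    (hfm : AntitoneOn (fun x => f x / x) (Ioc 0 1)) {a b : ℝ} (ha : 0 ≤ a) (hab : a ≤ b)
    (hb : b ≤ 1) : a * f b ≤ b * f a := by
  rcases ha.eq_or_lt with rfl | ha
  · simpa using mul_nonneg (ha.trans hab) hf0
  · have hb0 : 0 < b := ha.trans_le hab
    have h := hfm ⟨ha, hab.trans hb⟩ ⟨hb0, hb⟩ hab
    rw [div_le_div_iff₀ hb0 ha] at h
    linarith

theorem one_sub_mul_apply_le_of_antitoneOn_div {f : ℝ → ℝ} (hf0 : 0 ≤ f 0)
    (hsym : ∀ x ∈ Icc (0 : ℝ) 1, f x = f (1 - x))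
    (hfm : AntitoneOn (fun x => f x / x) (Ioc 0 1)) {a b : ℝ} (ha : 0 ≤ a) (hab : a ≤ b)
    (hb : b ≤ 1) : (1 - b) * f a ≤ (1 - a) * f b := by
  rw [hsym a ⟨ha, hab.trans hb⟩, hsym b ⟨ha.trans hab, hb⟩]
  exact mul_apply_le_mul_apply_of_antitoneOn_div hf0 hfm (by linarith) (by linarith)
    (by linarith)

theorem cost_zero (f : ℝ → ℝ) (q : List ℝ) : cost f 0 q = 0 := by
  rw [cost]

theorem cost_of_length_lt (f : ℝ → ℝ) {θ : ℕ} {q : List ℝ} (h : q.length < θ) :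
    cost f θ q = 0 := by
  cases θ with
  | zero => exact cost_zero f q
  | succ θ => rw [cost, if_pos h]

/-- The expected cost for threshold `s + 1` when a node of parameter `x` is queried first and the
remaining nodes `r` are then handled optimally. -/
noncomputable def queryCost (f : ℝ → ℝ) (s : ℕ) (x : ℝ) (r : List ℝ) : ℝ :=
  f x + x * cost f s r + (1 - x) * cost f (s + 1) r

theorem cost_succ (f : ℝ → ℝ) {s : ℕ} {q : List ℝ} (h : s + 1 ≤ q.length) :
    cost f (s + 1) q = ⨅ i : Fin q.length, queryCost f s q[i] (q.eraseIdx i) := by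
  rw [cost, if_neg (by omega)]
  rfl

theorem cost_succ_le_queryCost (f : ℝ → ℝ) {s i : ℕ} {q : List ℝ} (hs : s + 1 ≤ q.length)
    (hi : i < q.length) : cost f (s + 1) q ≤ queryCost f s q[i] (q.eraseIdx i) := by
  rw [cost_succ f hs]
  exact ciInf_le (finite_range _).bddBelow (⟨i, hi⟩ : Fin q.length)

def IsSortedProbs (q : List ℝ) : Prop :=
  q.SortedLE ∧ ∀ x ∈ q, x ∈ Icc (0 : ℝ) 1

theorem IsSortedProbs.eraseIdx {q : List ℝ} (hq : IsSortedProbs q) (i : ℕ) :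
    IsSortedProbs (q.eraseIdx i) :=
  ⟨(hq.1.pairwise.eraseIdx i).sortedLE, fun x hx => hq.2 x (List.mem_of_mem_eraseIdx hx)⟩

theorem IsSortedProbs.getElem_mem {q : List ℝ} (hq : IsSortedProbs q) {i : ℕ}
    (hi : i < q.length) : q[i] ∈ Icc (0 : ℝ) 1 :=
  hq.2 _ (List.getElem_mem hi)

theorem IsSortedProbs.getElem_le_getElem {q : List ℝ} (hq : IsSortedProbs q) {i j : ℕ}
    (hij : i ≤ j) (hj : j < q.length) : q[i] ≤ q[j] :=
  hq.1.getElem_le_getElem_of_le hij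

/-- For a sorted list, the node with the `(s + 1)`-th largest parameter (the pivot) is queried first
by an optimal strategy for threshold `s + 1`. -/
def PivotFirstOptimal (f : ℝ → ℝ) (q : List ℝ) : Prop :=
  ∀ (s t : ℕ) (ht : t < q.length), t + s + 1 = q.length →
    cost f (s + 1) q = queryCost f s q[t] (q.eraseIdx t)

def PivotFirstOptimalBelow (f : ℝ → ℝ) (n : ℕ) : Prop :=
  ∀ r : List ℝ, r.length < n → IsSortedProbs r → PivotFirstOptimal f r

section Pivot

variable {f : ℝ → ℝ}

theorem queryCost_exchange {s : ℕ} {a b X Z : ℝ} {Y : List ℝ} (hb0 : 0 ≤ b) (hb1 : b ≤ 1)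
    (hX : X ≤ queryCost f s a Y) (hZ : Z = queryCost f s b Y) :
    (1 - b) * X - (1 - a) * Z ≤ (a - b) * cost f s Y + (1 - b) * f a - (1 - a) * f b ∧
      b * X - a * Z ≤ (b - a) * cost f (s + 1) Y + b * f a - a * f b := by
  unfold queryCost at hX hZ
  subst hZ
  constructor
  · linarith [mul_le_mul_of_nonneg_left hX (sub_nonneg.2 hb1)]
  · linarith [mul_le_mul_of_nonneg_left hX hb0]

theorem PivotFirstOptimal.cost_eq {q R : List ℝ} {s t : ℕ} {c : ℝ}
    (h : PivotFirstOptimal f q) (ht : t + s + 1 = q.length) (hc : q[t]'(by omega) = c)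
    (hR : q.eraseIdx t = R) : cost f (s + 1) q = queryCost f s c R :=
  hc ▸ hR ▸ h s t _ ht

theorem PivotFirstOptimalBelow.mono {m n : ℕ} (h : PivotFirstOptimalBelow f n) (hmn : m ≤ n) :
    PivotFirstOptimalBelow f m :=
  fun r hr => h r (hr.trans_le hmn)

variable {q : List ℝ} {s t u : ℕ}

theorem cost_exchange_of_lt (hpiv : PivotFirstOptimalBelow f q.length) (hq : IsSortedProbs q)
    (hut : u < t) (ht : t + s + 1 = q.length) :
    (1 - q[t]) * cost f (s + 1) (q.eraseIdx t) - (1 - q[u]) * cost f (s + 1) (q.eraseIdx u)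
        ≤ (q[u] - q[t]) * cost f s ((q.eraseIdx t).eraseIdx u)
          + (1 - q[t]) * f q[u] - (1 - q[u]) * f q[t] ∧
      q[t] * cost f (s + 1) (q.eraseIdx t) - q[u] * cost f (s + 1) (q.eraseIdx u)
        ≤ (q[t] - q[u]) * cost f (s + 1) ((q.eraseIdx t).eraseIdx u)
          + q[t] * f q[u] - q[u] * f q[t] := by
  have hb := hq.getElem_mem (i := t) (by omega)
  refine queryCost_exchange hb.1 hb.2 ?_ ?_
  · have h := cost_succ_le_queryCost f (q := q.eraseIdx t) (s := s) (i := u) (by grind) (by grind)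
    rwa [List.getElem_eraseIdx_of_lt _ hut] at h
  · exact (hpiv _ (by grind) (hq.eraseIdx u)).cost_eq (t := t - 1) (by grind) (by grind)
      (List.eraseIdx_eraseIdx_pred q hut)

theorem cost_exchange_of_gt (hpiv : PivotFirstOptimalBelow f q.length) (hq : IsSortedProbs q)
    (htu : t < u) (hu : u < q.length) (ht : t + s + 2 = q.length) :
    (1 - q[t]) * cost f (s + 1) (q.eraseIdx t) - (1 - q[u]) * cost f (s + 1) (q.eraseIdx u)
        ≤ (q[u] - q[t]) * cost f s ((q.eraseIdx u).eraseIdx t)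
          + (1 - q[t]) * f q[u] - (1 - q[u]) * f q[t] ∧
      q[t] * cost f (s + 1) (q.eraseIdx t) - q[u] * cost f (s + 1) (q.eraseIdx u)
        ≤ (q[t] - q[u]) * cost f (s + 1) ((q.eraseIdx u).eraseIdx t)
          + q[t] * f q[u] - q[u] * f q[t] := by
  have hb := hq.getElem_mem (i := t) (by omega)
  refine queryCost_exchange hb.1 hb.2 ?_ ?_
  · have h := cost_succ_le_queryCost f (q := q.eraseIdx t) (s := s) (i := u - 1) (by grind)
      (by grind)
    rwa [List.eraseIdx_eraseIdx_pred q htu, show (q.eraseIdx t)[u - 1]'(by grind) = q[u] by grind]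
      at h
  · exact (hpiv _ (by grind) (hq.eraseIdx u)).cost_eq (t := t) (by grind) (by grind) rfl

theorem mul_cost_exchange_of_lt (hf0 : 0 ≤ f 0) (hfm : AntitoneOn (fun x => f x / x) (Ioc 0 1))
    (hpiv : PivotFirstOptimalBelow f q.length) (hq : IsSortedProbs q) (hut : u < t)
    (ht : t + s + 1 = q.length) :
    q[t] * cost f s (q.eraseIdx t) - q[u] * cost f s (q.eraseIdx u)
      ≤ (q[t] - q[u]) * cost f s ((q.eraseIdx t).eraseIdx u)
        + q[t] * f q[u] - q[u] * f q[t] := by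
  induction s generalizing q with
  | zero =>
    have ha := hq.getElem_mem (i := u) (by omega)
    have hb := hq.getElem_mem (i := t) (by omega)
    simp only [cost_zero]
    linarith [mul_apply_le_mul_apply_of_antitoneOn_div hf0 hfm ha.1
      (hq.getElem_le_getElem hut.le (by omega)) hb.2]
  | succ s ih =>
    -- every list below has pivot `c = q[t + 1]`; removing it from `q` leaves `r`
    set r := q.eraseIdx (t + 1)
    have hc := hq.getElem_mem (i := t + 1) (by omega)
    have hpivr : PivotFirstOptimalBelow f r.length := hpiv.mono (by grind)
    have hr : (q.eraseIdx t).eraseIdx t = r.eraseIdx t :=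
      List.eraseIdx_eraseIdx_pred q (lt_add_one t)
    have e₁ : cost f (s + 1) (q.eraseIdx t) = queryCost f s q[t + 1] (r.eraseIdx t) :=
      (hpiv _ (by grind) (hq.eraseIdx t)).cost_eq (t := t) (by grind) (by grind) hr
    have e₂ : cost f (s + 1) (q.eraseIdx u) = queryCost f s q[t + 1] (r.eraseIdx u) :=
      (hpiv _ (by grind) (hq.eraseIdx u)).cost_eq (t := t) (by grind) (by grind)
        (by simpa using List.eraseIdx_eraseIdx_pred q (show u < t + 1 by omega))
    have e₃ : cost f (s + 1) ((q.eraseIdx t).eraseIdx u)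
        = queryCost f s q[t + 1] ((r.eraseIdx t).eraseIdx u) :=
      (hpiv _ (by grind) ((hq.eraseIdx t).eraseIdx u)).cost_eq (t := t - 1) (by grind)
        (by grind) (by rw [List.eraseIdx_eraseIdx_pred _ hut, hr])
    have hrt : r[t]'(by grind) = q[t] := List.getElem_eraseIdx_of_lt _ (by omega)
    have hru : r[u]'(by grind) = q[u] := List.getElem_eraseIdx_of_lt _ (by omega)
    have h₁ := ih hpivr (hq.eraseIdx _) (by grind)
    have h₂ := (cost_exchange_of_lt hpivr (hq.eraseIdx _) hut (s := s) (by grind)).2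
    rw [hrt, hru] at h₁ h₂
    rw [e₁, e₂, e₃]
    unfold queryCost
    linarith [mul_le_mul_of_nonneg_left h₁ hc.1, mul_le_mul_of_nonneg_left h₂ (sub_nonneg.2 hc.2)]

theorem one_sub_mul_cost_exchange_of_gt (hf0 : 0 ≤ f 0)
    (hsym : ∀ x ∈ Icc (0 : ℝ) 1, f x = f (1 - x))
    (hfm : AntitoneOn (fun x => f x / x) (Ioc 0 1)) (hpiv : PivotFirstOptimalBelow f q.length)
    (hq : IsSortedProbs q) (htu : t < u) (hu : u < q.length) (ht : t + s + 1 = q.length) :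
    (1 - q[t]) * cost f (s + 1) (q.eraseIdx t) - (1 - q[u]) * cost f (s + 1) (q.eraseIdx u)
      ≤ (q[u] - q[t]) * cost f s ((q.eraseIdx u).eraseIdx t)
        + (1 - q[t]) * f q[u] - (1 - q[u]) * f q[t] := by
  induction t generalizing q u with
  | zero =>
    have ha := hq.getElem_mem hu
    have hb := hq.getElem_mem (i := 0) (by omega)
    rw [cost_of_length_lt f (by grind), cost_of_length_lt f (by grind),
      cost_of_length_lt f (by grind)]
    linarith [one_sub_mul_apply_le_of_antitoneOn_div hf0 hsym hfm hb.1
      (hq.getElem_le_getElem htu.le hu) ha.2]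
  | succ t ih =>
    obtain ⟨s, rfl⟩ : ∃ s', s = s' + 1 := ⟨s - 1, by omega⟩
    -- every list below has pivot `d = q[t]`; removing it from `q` leaves `r`
    set r := q.eraseIdx t
    have hd := hq.getElem_mem (i := t) (by omega)
    have hpivr : PivotFirstOptimalBelow f r.length := hpiv.mono (by grind)
    have e₁ : cost f (s + 1 + 1) (q.eraseIdx (t + 1)) = queryCost f (s + 1) q[t] (r.eraseIdx t) :=
      (hpiv _ (by grind) (hq.eraseIdx _)).cost_eq (t := t) (by grind) (by grind)
        (List.eraseIdx_eraseIdx_pred q (lt_add_one t)).symm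
    have e₂ : cost f (s + 1 + 1) (q.eraseIdx u) = queryCost f (s + 1) q[t] (r.eraseIdx (u - 1)) :=
      (hpiv _ (by grind) (hq.eraseIdx u)).cost_eq (t := t) (by grind) (by grind)
        (List.eraseIdx_eraseIdx_pred q (by omega)).symm
    have e₃ : cost f (s + 1) ((q.eraseIdx u).eraseIdx (t + 1))
        = queryCost f s q[t] ((r.eraseIdx (u - 1)).eraseIdx t) :=
      (hpiv _ (by grind) ((hq.eraseIdx u).eraseIdx _)).cost_eq (t := t) (by grind) (by grind)
        (by rw [← List.eraseIdx_eraseIdx_pred _ (lt_add_one t), Nat.add_sub_cancel,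
          List.eraseIdx_eraseIdx_pred q (show t < u by omega)])
    have hrt : r[t]'(by grind) = q[t + 1] := List.getElem_eraseIdx_of_ge _ le_rfl
    have hru : r[u - 1]'(by grind) = q[u] := by grind
    have h₁ := ih hpivr (hq.eraseIdx _) (u := u - 1) (by omega) (by grind) (by grind)
    have h₂ := (cost_exchange_of_gt hpivr (hq.eraseIdx _) (u := u - 1) (t := t) (s := s)
      (by omega) (by grind) (by grind)).1
    rw [hrt, hru] at h₁ h₂
    rw [e₁, e₂, e₃]
    unfold queryCost
    linarith [mul_le_mul_of_nonneg_left h₁ (sub_nonneg.2 hd.2), mul_le_mul_of_nonneg_left h₂ hd.1]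

theorem queryCost_pivot_le {i : ℕ} (hf0 : 0 ≤ f 0)
    (hsym : ∀ x ∈ Icc (0 : ℝ) 1, f x = f (1 - x))
    (hfm : AntitoneOn (fun x => f x / x) (Ioc 0 1)) (hpiv : PivotFirstOptimalBelow f q.length)
    (hq : IsSortedProbs q) (ht : t + s + 1 = q.length) (hi : i < q.length) :
    queryCost f s q[t] (q.eraseIdx t) ≤ queryCost f s q[i] (q.eraseIdx i) := by
  rcases lt_trichotomy i t with hit | rfl | hti
  · have h₁ := mul_cost_exchange_of_lt hf0 hfm hpiv hq hit ht
    have h₂ := (cost_exchange_of_lt hpiv hq hit ht).1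
    unfold queryCost
    linarith
  · exact le_rfl
  · obtain ⟨s, rfl⟩ : ∃ s', s = s' + 1 := ⟨s - 1, by omega⟩
    have h₁ := (cost_exchange_of_gt hpiv hq hti hi (by omega)).2
    have h₂ := one_sub_mul_cost_exchange_of_gt hf0 hsym hfm hpiv hq hti hi ht
    unfold queryCost
    linarith

theorem pivotFirstOptimal (hf0 : 0 ≤ f 0) (hsym : ∀ x ∈ Icc (0 : ℝ) 1, f x = f (1 - x))
    (hfm : AntitoneOn (fun x => f x / x) (Ioc 0 1)) {q : List ℝ} (hq : IsSortedProbs q) :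
    PivotFirstOptimal f q := by
  induction h : q.length using Nat.strong_induction_on generalizing q with
  | _ n ih =>
  have hpiv : PivotFirstOptimalBelow f q.length := fun r hr hr' => ih _ (h ▸ hr) hr' rfl
  intro s t ht hts
  refine le_antisymm (cost_succ_le_queryCost f (by omega) ht) ?_
  have : Nonempty (Fin q.length) := ⟨⟨t, ht⟩⟩
  rw [cost_succ f (by omega)]
  exact le_ciInf fun i => queryCost_pivot_le hf0 hsym hfm hpiv hq hts i.2

end Pivot

/-- Lemma 4 of the paper: for `1 ≤ i ≤ k ≤ m-1` (1-based indices),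
`(1-p_{k+1}) C_f(m-k; p_{-(k+1)}) - (1-p_i) C_f(m-k; p_{-i})` is bounded by
`(p_i - p_{k+1}) C_f(m-k-1; p_{-(i,k+1)}) + (1-p_{k+1}) f(p_i) - (1-p_i) f(p_{k+1})`. -/
theorem stmt_4 (f : ℝ → ℝ)
    (hf_nonneg : ∀ x ∈ Set.Icc (0:ℝ) 1, 0 ≤ f x)
    (hf_sym : ∀ x ∈ Set.Icc (0:ℝ) 1, f x = f (1 - x))
    (hf_mono : AntitoneOn (fun x => f x / x) (Set.Ioc (0:ℝ) 1))
    (m : ℕ) (p : Fin m → ℝ)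
    (hp0 : ∀ i, 0 ≤ p i) (hp1 : ∀ i, p i ≤ 1) (hsorted : Monotone p)
    (k i : ℕ) (hi1 : 1 ≤ i) (hik : i ≤ k) (hkm : k + 1 ≤ m) :
    (1 - p ⟨k, by omega⟩) * cost f (m - k) ((List.ofFn p).eraseIdx k)
      - (1 - p ⟨i - 1, by omega⟩) * cost f (m - k) ((List.ofFn p).eraseIdx (i - 1))
    ≤ (p ⟨i - 1, by omega⟩ - p ⟨k, by omega⟩) *
        cost f (m - k - 1) (((List.ofFn p).eraseIdx k).eraseIdx (i - 1))
      + (1 - p ⟨k, by omega⟩) * f (p ⟨i - 1, by omega⟩)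
      - (1 - p ⟨i - 1, by omega⟩) * f (p ⟨k, by omega⟩) := by
  have hq : IsSortedProbs (List.ofFn p) :=
    ⟨List.sortedLE_ofFn_iff.2 hsorted,
      by simpa [List.forall_mem_ofFn_iff] using fun j => ⟨hp0 j, hp1 j⟩⟩
  have hpiv : PivotFirstOptimalBelow f (List.ofFn p).length := fun r _ hr =>
    pivotFirstOptimal (hf_nonneg 0 ⟨le_rfl, zero_le_one⟩) hf_sym hf_mono hr
  obtain ⟨s, hs⟩ : ∃ s, m - k = s + 1 := ⟨m - k - 1, by omega⟩
  have h := (cost_exchange_of_lt hpiv hq (u := i - 1) (t := k) (s := s) (by omega)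
    (by rw [List.length_ofFn]; omega)).1
  rw [hs, Nat.add_sub_cancel]
  simpa using h
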